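/- arXiv:2211.12685 — 2 statements merged into one kernel-verified Lean document; each statement's English description precedes it below -/
import Mathlib

section
/- Under the assumptions of the preceding SGD descent lemma, if T ≥ Δ(θ_0)/(αε) + (2/(sαε)) Σ_{t=0}^{T-1} E[‖g_t - ∇L(θ_t)‖²], then (1/T) Σ_{t=0}^{T-1} E[‖∇L(θ_t)‖²] ≤ ε. -/
/-!
Smoothness gives the descent inequality `L b ≤ L a + ⟪∇L a, b - a⟫ + (s/2)‖b - a‖²`. Applied to one
SGD step and written with the noise `e_t = g_t - ∇L(θ_t)`, it bounds `L(θ_{t+1})` by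
`L(θ_t) - (η_t - sη_t²/2)‖∇L(θ_t)‖² + (sη_t² - η_t)⟪∇L(θ_t), e_t⟫ + (sη_t²/2)‖e_t‖²`.
The cross term has expectation zero because `∇L(θ_t)` is `𝓕_t`-measurable and `E[e_t | 𝓕_t] = 0`.
Telescoping the expectations over `t < T` and bounding `L(θ_T) ≥ inf L`, `η_t - sη_t²/2 ≥ α`,
`sη_t²/2 ≤ 2/s` gives `α Σ E‖∇L(θ_t)‖² ≤ Δ + (2/s) Σ E‖e_t‖² ≤ Tαε`.
-/

open MeasureTheory ProbabilityTheory

open scoped InnerProductSpace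

section Descent

variable {F : Type*} [NormedAddCommGroup F] [InnerProductSpace ℝ F] [CompleteSpace F]
  {L : F → ℝ} {gradL : F → F} {s : ℝ}

theorem le_add_inner_add_of_lipschitz_gradient (hgrad : ∀ a, HasGradientAt L (gradL a) a)
    (hsmooth : ∀ a b, ‖gradL a - gradL b‖ ≤ s * ‖a - b‖) (a b : F) :
    L b ≤ L a + ⟪gradL a, b - a⟫_ℝ + s / 2 * ‖b - a‖ ^ 2 := by
  set v := b - a
  -- The claim is `ψ 1 ≤ ψ 0`.
  let ψ : ℝ → ℝ := fun u => L (a + u • v) - u * ⟪gradL a, v⟫_ℝ - s / 2 * u ^ 2 * ‖v‖ ^ 2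
  have hψ : ∀ u, HasDerivAt ψ (⟪gradL (a + u • v) - gradL a, v⟫_ℝ - s * u * ‖v‖ ^ 2) u := by
    intro u
    have hline : HasDerivAt (fun u : ℝ => a + u • v) v u := by
      simpa using ((hasDerivAt_id u).smul_const v).const_add a
    have hL := (hgrad (a + u • v)).hasFDerivAt.comp_hasDerivAt u hline
    simp only [InnerProductSpace.toDual_apply_apply] at hL
    refine ((hL.sub ((hasDerivAt_id u).mul_const ⟪gradL a, v⟫_ℝ)).sub
      (((hasDerivAt_pow 2 u).const_mul (s / 2)).mul_const (‖v‖ ^ 2))).congr_deriv ?_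
    rw [inner_sub_left]
    push_cast
    ring
  have hψ_nonpos : ∀ u ∈ interior (Set.Icc (0 : ℝ) 1),
      ⟪gradL (a + u • v) - gradL a, v⟫_ℝ - s * u * ‖v‖ ^ 2 ≤ 0 := by
    intro u hu
    rw [interior_Icc] at hu
    calc ⟪gradL (a + u • v) - gradL a, v⟫_ℝ - s * u * ‖v‖ ^ 2
        ≤ ‖gradL (a + u • v) - gradL a‖ * ‖v‖ - s * u * ‖v‖ ^ 2 := by
          gcongr; exact real_inner_le_norm _ _
      _ ≤ s * ‖u • v‖ * ‖v‖ - s * u * ‖v‖ ^ 2 := by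
          gcongr; simpa using hsmooth (a + u • v) a
      _ = 0 := by rw [norm_smul, Real.norm_of_nonneg hu.1.le]; ring
  have hanti : AntitoneOn ψ (Set.Icc 0 1) :=
    antitoneOn_of_hasDerivWithinAt_nonpos (convex_Icc 0 1)
      (fun u _ => (hψ u).continuousAt.continuousWithinAt)
      (fun u _ => (hψ u).hasDerivWithinAt) hψ_nonpos
  have h10 := hanti (by simp) (by simp) zero_le_one
  simp only [ψ, zero_smul, one_smul, add_zero, add_sub_cancel, v] at h10
  linarith

end Descent

section CrossTerm

variable {Ω F : Type*} [NormedAddCommGroup F] [InnerProductSpace ℝ F]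
  {m m0 : MeasurableSpace Ω} {μ : Measure Ω} {X g : Ω → F}

theorem integrable_inner_of_integrable_sq_norm {Y : Ω → F} (hX : AEStronglyMeasurable X μ)
    (hY : AEStronglyMeasurable Y μ) (hX2 : Integrable (fun ω => ‖X ω‖ ^ 2) μ)
    (hY2 : Integrable (fun ω => ‖Y ω‖ ^ 2) μ) :
    Integrable (fun ω => ⟪X ω, Y ω⟫_ℝ) μ := by
  refine ((hX2.add hY2).div_const 2).mono' (hX.inner hY) (ae_of_all _ fun ω => ?_)
  have := abs_real_inner_le_norm (X ω) (Y ω)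
  rw [Real.norm_eq_abs]
  dsimp only [Pi.add_apply]
  nlinarith [sq_nonneg (‖X ω‖ - ‖Y ω‖)]

theorem inner_sub_ae_eq_zero_of_not_integrable (hg : ¬Integrable g μ)
    (hgX : μ[g | m] =ᵐ[μ] X) : (fun ω => ⟪X ω, g ω - X ω⟫_ℝ) =ᵐ[μ] 0 := by
  rw [condExp_of_not_integrable hg] at hgX
  filter_upwards [hgX] with ω hω
  simp [← hω]

theorem integrable_inner_sub_of_condExp_ae_eq (hm : m ≤ m0) (hX : StronglyMeasurable[m] X)
    (hgX : μ[g | m] =ᵐ[μ] X) (hX2 : Integrable (fun ω => ‖X ω‖ ^ 2) μ)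
    (he2 : Integrable (fun ω => ‖g ω - X ω‖ ^ 2) μ) :
    Integrable (fun ω => ⟪X ω, g ω - X ω⟫_ℝ) μ := by
  by_cases hg : Integrable g μ
  · have hXa : AEStronglyMeasurable X μ := (hX.mono hm).aestronglyMeasurable
    exact integrable_inner_of_integrable_sq_norm hXa (hg.1.sub hXa) hX2 he2
  · exact (integrable_congr (inner_sub_ae_eq_zero_of_not_integrable hg hgX)).2
      (integrable_zero _ _ _)

theorem integral_inner_sub_of_condExp_ae_eq [CompleteSpace F] (hm : m ≤ m0)
    [SigmaFinite (μ.trim hm)] (hX : StronglyMeasurable[m] X) (hgX : μ[g | m] =ᵐ[μ] X)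
    (hX2 : Integrable (fun ω => ‖X ω‖ ^ 2) μ) (he2 : Integrable (fun ω => ‖g ω - X ω‖ ^ 2) μ) :
    ∫ ω, ⟪X ω, g ω - X ω⟫_ℝ ∂μ = 0 := by
  by_cases hg : Integrable g μ
  swap
  · rw [integral_congr_ae (inner_sub_ae_eq_zero_of_not_integrable hg hgX), integral_zero']
  have hsplit : ∀ ω, ⟪X ω, g ω - X ω⟫_ℝ = ⟪X ω, g ω⟫_ℝ - ‖X ω‖ ^ 2 := fun ω => by
    rw [inner_sub_right, real_inner_self_eq_norm_sq]
  have hXg : Integrable (fun ω => ⟪X ω, g ω⟫_ℝ) μ := by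
    refine ((integrable_inner_sub_of_condExp_ae_eq hm hX hgX hX2 he2).add hX2).congr
      (ae_of_all _ fun ω => ?_)
    simp only [Pi.add_apply, hsplit, sub_add_cancel]
  have hpull : μ[fun ω => ⟪X ω, g ω⟫_ℝ | m] =ᵐ[μ] fun ω => ⟪X ω, (μ[g | m]) ω⟫_ℝ :=
    condExp_bilin_of_stronglyMeasurable_left (innerSL ℝ) hX hXg hg
  calc ∫ ω, ⟪X ω, g ω - X ω⟫_ℝ ∂μ
      = ∫ ω, (μ[fun ω => ⟪X ω, g ω⟫_ℝ | m]) ω ∂μ - ∫ ω, ‖X ω‖ ^ 2 ∂μ := by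
        simp_rw [hsplit]; rw [integral_sub hXg hX2, integral_condExp hm]
    _ = 0 := by
        rw [sub_eq_zero]
        refine integral_congr_ae ?_
        filter_upwards [hpull, hgX] with ω h1 h2
        rw [h1, h2, real_inner_self_eq_norm_sq]

end CrossTerm

theorem sum_range_le_sub_add_sum_of_le_sub_add {a b c : ℕ → ℝ}
    (h : ∀ t, a (t + 1) ≤ a t - b t + c t) (T : ℕ) :
    ∑ t ∈ Finset.range T, b t ≤ a 0 - a T + ∑ t ∈ Finset.range T, c t := by
  rw [← Finset.sum_range_sub', ← Finset.sum_add_distrib]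
  exact Finset.sum_le_sum fun t _ => by linarith [h t]

theorem div_two_mul_sq_le_two_div {s η : ℝ} (hs : 0 < s) (hη₀ : 0 ≤ η) (hη : η ≤ 2 / s) :
    s / 2 * η ^ 2 ≤ 2 / s := by
  have hsη : s * η ≤ 2 := by rwa [le_div_iff₀ hs, mul_comm] at hη
  rw [le_div_iff₀ hs]
  nlinarith [mul_le_mul hsη hsη (by positivity) zero_le_two]

section SGD

variable {Ω F : Type*} [NormedAddCommGroup F] [InnerProductSpace ℝ F] [CompleteSpace F]
  {L : F → ℝ} {gradL : F → F} {s : ℝ}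

theorem integral_le_of_sgd_step {m m0 : MeasurableSpace Ω} {μ : Measure Ω}
    (hgrad : ∀ a, HasGradientAt L (gradL a) a)
    (hsmooth : ∀ a b, ‖gradL a - gradL b‖ ≤ s * ‖a - b‖)
    (hm : m ≤ m0) [SigmaFinite (μ.trim hm)] {θ g : Ω → F} (η : ℝ)
    (hθ : StronglyMeasurable[m] fun ω => gradL (θ ω))
    (hunbiased : μ[g | m] =ᵐ[μ] fun ω => gradL (θ ω))
    (hL : Integrable (fun ω => L (θ ω)) μ) (hL' : Integrable (fun ω => L (θ ω - η • g ω)) μ)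
    (hG : Integrable (fun ω => ‖gradL (θ ω)‖ ^ 2) μ)
    (hD : Integrable (fun ω => ‖g ω - gradL (θ ω)‖ ^ 2) μ) :
    ∫ ω, L (θ ω - η • g ω) ∂μ ≤ ∫ ω, L (θ ω) ∂μ
      - (η - s / 2 * η ^ 2) * ∫ ω, ‖gradL (θ ω)‖ ^ 2 ∂μ
      + s / 2 * η ^ 2 * ∫ ω, ‖g ω - gradL (θ ω)‖ ^ 2 ∂μ := by
  set X := fun ω => gradL (θ ω)
  set e := fun ω => g ω - X ω
  set c := η - s / 2 * η ^ 2
  have hpointwise : ∀ ω, L (θ ω - η • g ω) ≤ L (θ ω) - c * ‖X ω‖ ^ 2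
      + (s * η ^ 2 - η) * ⟪X ω, e ω⟫_ℝ + s / 2 * η ^ 2 * ‖e ω‖ ^ 2 := by
    intro ω
    have h := le_add_inner_add_of_lipschitz_gradient hgrad hsmooth (θ ω) (θ ω - η • g ω)
    have hg : g ω = X ω + e ω := (add_sub_cancel _ _).symm
    have hinner : ⟪X ω, g ω⟫_ℝ = ‖X ω‖ ^ 2 + ⟪X ω, e ω⟫_ℝ := by
      rw [hg, inner_add_right, real_inner_self_eq_norm_sq]
    have hnorm : ‖g ω‖ ^ 2 = ‖X ω‖ ^ 2 + 2 * ⟪X ω, e ω⟫_ℝ + ‖e ω‖ ^ 2 := by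
      rw [hg, norm_add_sq_real]
    rw [sub_sub_cancel_left, inner_neg_right, norm_neg, norm_smul, mul_pow, Real.norm_eq_abs,
      sq_abs, real_inner_smul_right, hinner, hnorm] at h
    linear_combination h
  have hXe := integrable_inner_sub_of_condExp_ae_eq hm hθ hunbiased hG hD
  have hint₁ : Integrable (fun ω => L (θ ω) - c * ‖X ω‖ ^ 2) μ := hL.sub (hG.const_mul c)
  have hint₂ : Integrable (fun ω => L (θ ω) - c * ‖X ω‖ ^ 2
      + (s * η ^ 2 - η) * ⟪X ω, e ω⟫_ℝ) μ := hint₁.add (hXe.const_mul _)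
  calc ∫ ω, L (θ ω - η • g ω) ∂μ
      ≤ ∫ ω, (L (θ ω) - c * ‖X ω‖ ^ 2
        + (s * η ^ 2 - η) * ⟪X ω, e ω⟫_ℝ + s / 2 * η ^ 2 * ‖e ω‖ ^ 2) ∂μ :=
        integral_mono hL' (hint₂.add (hD.const_mul _)) hpointwise
    _ = _ := by
        rw [integral_add hint₂ (hD.const_mul _), integral_add hint₁ (hXe.const_mul _),
          integral_sub hL (hG.const_mul _), integral_const_mul, integral_const_mul,
          integral_const_mul, integral_inner_sub_of_condExp_ae_eq hm hθ hunbiased hG hD]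
        ring

theorem sum_mul_integral_sq_norm_gradient_le [MeasurableSpace Ω] {μ : Measure Ω}
    [IsProbabilityMeasure μ] {𝓕 : ℕ → MeasurableSpace Ω} (h𝓕 : ∀ t, 𝓕 t ≤ ‹MeasurableSpace Ω›)
    (hgrad : ∀ a, HasGradientAt L (gradL a) a)
    (hsmooth : ∀ a b, ‖gradL a - gradL b‖ ≤ s * ‖a - b‖) (hbdd : BddBelow (Set.range L))
    {θ g : ℕ → Ω → F} {η : ℕ → ℝ} (hupdate : ∀ t ω, θ (t + 1) ω = θ t ω - η t • g t ω)
    (hmeas : ∀ t, StronglyMeasurable[𝓕 t] (θ t))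
    (hunbiased : ∀ t, μ[g t | 𝓕 t] =ᵐ[μ] fun ω => gradL (θ t ω))
    (hIntL : ∀ t, Integrable (fun ω => L (θ t ω)) μ)
    (hIntG : ∀ t, Integrable (fun ω => ‖gradL (θ t ω)‖ ^ 2) μ)
    (hIntD : ∀ t, Integrable (fun ω => ‖g t ω - gradL (θ t ω)‖ ^ 2) μ)
    {θ0 : F} (hθ0 : ∀ ω, θ 0 ω = θ0) (T : ℕ) :
    ∑ t ∈ Finset.range T, (η t - s / 2 * η t ^ 2) * ∫ ω, ‖gradL (θ t ω)‖ ^ 2 ∂μ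
      ≤ L θ0 - sInf (Set.range L)
        + ∑ t ∈ Finset.range T, s / 2 * η t ^ 2 * ∫ ω, ‖g t ω - gradL (θ t ω)‖ ^ 2 ∂μ := by
  have hgradL_cont : Continuous gradL :=
    (LipschitzWith.of_dist_le_mul (K := s.toNNReal) fun a b => by
      simpa [dist_eq_norm] using (hsmooth a b).trans
        (mul_le_mul_of_nonneg_right (Real.le_coe_toNNReal s) (norm_nonneg _))).continuous
  have hstep : ∀ t, ∫ ω, L (θ (t + 1) ω) ∂μ ≤ ∫ ω, L (θ t ω) ∂μ
      - (η t - s / 2 * η t ^ 2) * ∫ ω, ‖gradL (θ t ω)‖ ^ 2 ∂μ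
      + s / 2 * η t ^ 2 * ∫ ω, ‖g t ω - gradL (θ t ω)‖ ^ 2 ∂μ := fun t => by
    have hIntL' := hIntL (t + 1)
    simp only [hupdate] at hIntL' ⊢
    exact integral_le_of_sgd_step hgrad hsmooth (h𝓕 t) (η t)
      (hgradL_cont.comp_stronglyMeasurable (hmeas t)) (hunbiased t) (hIntL t) hIntL' (hIntG t)
      (hIntD t)
  have hL0 : ∫ ω, L (θ 0 ω) ∂μ = L θ0 := by simp [hθ0]
  have hLT : sInf (Set.range L) ≤ ∫ ω, L (θ T ω) ∂μ := by
    simpa using integral_mono (integrable_const _) (hIntL T) fun ω => csInf_le hbdd ⟨_, rfl⟩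
  have := sum_range_le_sub_add_sum_of_le_sub_add (a := fun t => ∫ ω, L (θ t ω) ∂μ) hstep T
  linarith

end SGD

/-- Convergence of SGD: under the SGD descent-lemma assumptions, if
`T ≥ Δ(θ₀)/(αε) + (2/(sαε)) Σ_t E‖g_t - ∇L(θ_t)‖²` then the averaged expected
squared gradient norm is at most `ε`. -/
theorem stmt_5
    {d : ℕ} {Ω : Type*} [MeasurableSpace Ω] (μ : Measure Ω) [IsProbabilityMeasure μ]
    (𝓕 : ℕ → MeasurableSpace Ω) (h𝓕 : ∀ t, 𝓕 t ≤ ‹MeasurableSpace Ω›)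
    (L : EuclideanSpace ℝ (Fin d) → ℝ)
    (gradL : EuclideanSpace ℝ (Fin d) → EuclideanSpace ℝ (Fin d))
    (s : ℝ) (hs : 0 < s)
    (hgrad : ∀ a, HasGradientAt L (gradL a) a)
    (hsmooth : ∀ a b, ‖gradL a - gradL b‖ ≤ s * ‖a - b‖)
    (hbdd : BddBelow (Set.range L))
    (θ : ℕ → Ω → EuclideanSpace ℝ (Fin d)) (g : ℕ → Ω → EuclideanSpace ℝ (Fin d))
    (η : ℕ → ℝ) (hη : ∀ t, η t ∈ Set.Ioo 0 (2 / s))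
    (hupdate : ∀ t ω, θ (t + 1) ω = θ t ω - η t • g t ω)
    (hmeas : ∀ t, Measurable[𝓕 t] (θ t))
    (hunbiased : ∀ t, μ[g t | 𝓕 t] =ᵐ[μ] fun ω => gradL (θ t ω))
    (hIntL : ∀ t, Integrable (fun ω => L (θ t ω)) μ)
    (hIntG : ∀ t, Integrable (fun ω => ‖gradL (θ t ω)‖ ^ 2) μ)
    (hIntD : ∀ t, Integrable (fun ω => ‖g t ω - gradL (θ t ω)‖ ^ 2) μ)
    (T : ℕ) (hT : 0 < T) (α : ℝ)
    (hα : α = (Finset.range T).inf'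
        (by simp [Finset.nonempty_range_iff, Nat.pos_iff_ne_zero.mp hT])
        (fun t => η t - s / 2 * η t ^ 2))
    (hαpos : 0 < α)
    (Δ : ℝ) (θ0 : EuclideanSpace ℝ (Fin d)) (hθ0 : ∀ ω, θ 0 ω = θ0)
    (hΔ : Δ = L θ0 - sInf (Set.range L))
    (ε : ℝ) (hε : 0 < ε)
    (hTbig : (T : ℝ) ≥ Δ / (α * ε)
        + (2 / (s * α * ε)) * ∑ t ∈ Finset.range T,
            ∫ ω, ‖g t ω - gradL (θ t ω)‖ ^ 2 ∂μ) :
    (1 / (T : ℝ)) * ∑ t ∈ Finset.range T, ∫ ω, ‖gradL (θ t ω)‖ ^ 2 ∂μ ≤ ε := by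
  set I := fun t => ∫ ω, ‖gradL (θ t ω)‖ ^ 2 ∂μ
  set D := fun t => ∫ ω, ‖g t ω - gradL (θ t ω)‖ ^ 2 ∂μ
  have hsum := sum_mul_integral_sq_norm_gradient_le h𝓕 hgrad hsmooth hbdd hupdate
    (fun t => (hmeas t).stronglyMeasurable) hunbiased hIntL hIntG hIntD hθ0 T
  have hI : α * ∑ t ∈ Finset.range T, I t
      ≤ ∑ t ∈ Finset.range T, (η t - s / 2 * η t ^ 2) * I t := by
    rw [Finset.mul_sum]
    exact Finset.sum_le_sum fun t ht =>
      mul_le_mul_of_nonneg_right (hα ▸ Finset.inf'_le _ ht) (integral_nonneg fun _ => by positivity)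
  have hD : ∑ t ∈ Finset.range T, s / 2 * η t ^ 2 * D t ≤ 2 / s * ∑ t ∈ Finset.range T, D t := by
    rw [Finset.mul_sum]
    exact Finset.sum_le_sum fun t _ => mul_le_mul_of_nonneg_right
      (div_two_mul_sq_le_two_div hs (hη t).1.le (hη t).2.le)
      (integral_nonneg fun _ => by positivity)
  have hαε : α * ∑ t ∈ Finset.range T, I t ≤ (T : ℝ) * (α * ε) :=
    calc α * ∑ t ∈ Finset.range T, I t ≤ Δ + 2 / s * ∑ t ∈ Finset.range T, D t := by
          rw [hΔ]; linarith
      _ ≤ (T : ℝ) * (α * ε) := by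
          rw [← div_le_iff₀ (by positivity)]
          refine Eq.trans_le ?_ hTbig
          ring
  rw [one_div, inv_mul_le_iff₀ (by exact_mod_cast hT)]
  nlinarith
end

section
/- Let p_{Y|X}, p̂_{Y|X} be conditional densities and p_X, p̂_X be marginal densities with ratios R_{Y|X} := p_{Y|X}/p̂_{Y|X} and R_X := p_X/p̂_X. For any conditional density q_{Y|X}, define p^g_X := R_X p̂_X (= p_X), p^g_{Y|X} := R_{Y|X} p̂_{Y|X} (= p_{Y|X}), and q^g_{Y|X} := q_{Y|X}/R_{Y|X}. Then H(p_{Y|X}, q_{Y|X}) ≤ H(p^g_{Y|X}, q^g_{Y|X}) := ∫ p^g_X(x) p^g_{Y|X}(y|x) log(1/q^g_{Y|X}(y|x)) dx dy, with equality if and only if p_{Y|X} = p̂_{Y|X} almost everywhere (w.r.t. p_X), and consequently h(Y|X) ≤ inf over q^g_{Y|X} of H(p^g_{Y|X}, q^g_{Y|X}) with equality iff p_{Y|X} = p̂_{Y|X} = q_{Y|X}. -/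
open MeasureTheory

lemma gibbs_slice {β : Type*} [MeasurableSpace β] (ν : Measure β) (a b : β → ℝ)
    (ha : ∀ y, 0 < a y) (hb : ∀ y, 0 < b y)
    (hai : Integrable a ν) (hbi : Integrable b ν)
    (hab : ∫ y, a y ∂ν = ∫ y, b y ∂ν) :
    (0 ≤ ∫ y, a y * Real.log (a y / b y) ∂ν) ∧
    (Integrable (fun y => a y * Real.log (a y / b y)) ν →
      (∫ y, a y * Real.log (a y / b y) ∂ν) = 0 → ∀ᵐ y ∂ν, a y = b y) := by
  have key : ∀ y, a y - b y ≤ a y * Real.log (a y / b y) := by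
    intro y
    have h1 := Real.log_le_sub_one_of_pos (div_pos (hb y) (ha y))
    rw [Real.log_div (hb y).ne' (ha y).ne'] at h1
    have h5 : Real.log (a y / b y) = Real.log (a y) - Real.log (b y) :=
      Real.log_div (ha y).ne' (hb y).ne'
    have h4 : a y * (b y / a y) = b y := mul_div_cancel₀ (b y) (ha y).ne'
    rw [h5]
    nlinarith [mul_le_mul_of_nonneg_left h1 (ha y).le]
  have keylt : ∀ y, a y ≠ b y → a y - b y < a y * Real.log (a y / b y) := by
    intro y hne
    have hne' : b y / a y ≠ 1 := by
      intro h
      exact hne ((div_eq_one_iff_eq (ha y).ne').mp h).symm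
    have h1 := Real.log_lt_sub_one_of_pos (div_pos (hb y) (ha y)) hne'
    rw [Real.log_div (hb y).ne' (ha y).ne'] at h1
    have h5 : Real.log (a y / b y) = Real.log (a y) - Real.log (b y) :=
      Real.log_div (ha y).ne' (hb y).ne'
    have h4 : a y * (b y / a y) = b y := mul_div_cancel₀ (b y) (ha y).ne'
    rw [h5]
    nlinarith [(mul_lt_mul_iff_right₀ (ha y)).2 h1]
  have hsub : (∫ y, (a y - b y) ∂ν) = 0 := by
    rw [integral_sub hai hbi, hab, sub_self]
  constructor
  · by_cases hci : Integrable (fun y => a y * Real.log (a y / b y)) ν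
    · calc (0:ℝ) = ∫ y, (a y - b y) ∂ν := hsub.symm
        _ ≤ ∫ y, a y * Real.log (a y / b y) ∂ν := integral_mono (hai.sub hbi) hci key
    · rw [integral_undef hci]
  · intro hci hzero
    have hd : Integrable (fun y => a y * Real.log (a y / b y) - (a y - b y)) ν :=
      hci.sub (hai.sub hbi)
    have hdnn : 0 ≤ fun y => a y * Real.log (a y / b y) - (a y - b y) :=
      fun y => sub_nonneg.2 (key y)
    have hgi : Integrable (fun y => a y - b y) ν := hai.sub hbi
    have hdz : (∫ y, (a y * Real.log (a y / b y) - (a y - b y)) ∂ν) = 0 := by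
      rw [integral_sub hci hgi, hsub, hzero, sub_zero]
    have := (integral_eq_zero_iff_of_nonneg hdnn hd).mp hdz
    filter_upwards [this] with y hy
    by_contra hne
    have := keylt y hne
    simp only [Pi.zero_apply] at hy
    linarith

lemma integrable_of_int_eq_one {β : Type*} [MeasurableSpace β] {ν : Measure β}
    {a : β → ℝ} (h : ∫ y, a y ∂ν = 1) : Integrable a ν := by
  by_contra hc
  rw [integral_undef hc] at h
  exact zero_ne_one h

lemma gibbs_prod {α β : Type*} [MeasurableSpace α] [MeasurableSpace β]
    (μ : Measure α) (ν : Measure β) [SFinite μ] [SFinite ν]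
    (pX : α → ℝ) (p g : α → β → ℝ)
    (hpX : ∀ x, 0 < pX x) (hp : ∀ x y, 0 < p x y) (hg : ∀ x y, 0 < g x y)
    (hp1 : ∀ x, ∫ y, p x y ∂ν = 1) (hg1 : ∀ x, ∫ y, g x y ∂ν = 1)
    (hInt : Integrable (fun z : α × β =>
      pX z.1 * p z.1 z.2 * Real.log (p z.1 z.2 / g z.1 z.2)) (μ.prod ν)) :
    (0 ≤ ∫ z, pX z.1 * p z.1 z.2 * Real.log (p z.1 z.2 / g z.1 z.2) ∂(μ.prod ν)) ∧
    ((∫ z, pX z.1 * p z.1 z.2 * Real.log (p z.1 z.2 / g z.1 z.2) ∂(μ.prod ν)) = 0 ↔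
      ∀ᵐ z ∂(μ.prod ν), p z.1 z.2 = g z.1 z.2) := by
  set F : α × β → ℝ := fun z => pX z.1 * p z.1 z.2 * Real.log (p z.1 z.2 / g z.1 z.2) with hF
  have hslice : ∀ x, (0 ≤ ∫ y, p x y * Real.log (p x y / g x y) ∂ν) ∧
      (Integrable (fun y => p x y * Real.log (p x y / g x y)) ν →
        (∫ y, p x y * Real.log (p x y / g x y) ∂ν) = 0 → ∀ᵐ y ∂ν, p x y = g x y) :=
    fun x => gibbs_slice ν (p x) (g x) (hp x) (hg x)
      (integrable_of_int_eq_one (hp1 x)) (integrable_of_int_eq_one (hg1 x))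
      (by rw [hp1 x, hg1 x])
  have hJ : ∀ x, (∫ y, F (x, y) ∂ν) = pX x * ∫ y, p x y * Real.log (p x y / g x y) ∂ν := by
    intro x
    rw [← integral_const_mul]
    congr 1
    funext y
    simp only [hF]
    ring
  have hJnn : ∀ x, 0 ≤ ∫ y, F (x, y) ∂ν := by
    intro x
    rw [hJ x]
    exact mul_nonneg (hpX x).le (hslice x).1
  have hIP : (∫ z, F z ∂(μ.prod ν)) = ∫ x, ∫ y, F (x, y) ∂ν ∂μ := integral_prod F hInt
  constructor
  · rw [hIP]
    exact integral_nonneg hJnn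
  constructor
  · -- forward direction
    intro hzero
    rw [hIP] at hzero
    have hJint : Integrable (fun x => ∫ y, F (x, y) ∂ν) μ := hInt.integral_prod_left
    have hJz : ∀ᵐ x ∂μ, (∫ y, F (x, y) ∂ν) = 0 := by
      have := (integral_eq_zero_iff_of_nonneg hJnn hJint).mp hzero
      filter_upwards [this] with x hx using hx
    obtain ⟨F', hF'meas, hFF'⟩ := hInt.aestronglyMeasurable
    have hFae : ∀ᵐ x ∂μ, ∀ᵐ y ∂ν, F (x, y) = F' (x, y) :=
      Measure.ae_ae_of_ae_prod hFF'
    have hmain : ∀ᵐ x ∂μ, ∀ᵐ y ∂ν, F' (x, y) = 0 := by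
      filter_upwards [hJz, hInt.prod_right_ae, hFae] with x hx hix hfx
      have hcint : Integrable (fun y => p x y * Real.log (p x y / g x y)) ν := by
        have : (fun y => p x y * Real.log (p x y / g x y)) =
            fun y => (pX x)⁻¹ * F (x, y) := by
          funext y
          simp only [hF]
          have hne : pX x ≠ 0 := (hpX x).ne'
          field_simp
        rw [this]
        exact hix.const_mul _
      have hcz : (∫ y, p x y * Real.log (p x y / g x y) ∂ν) = 0 := by
        have := hJ x
        rw [hx] at this
        rcases mul_eq_zero.mp this.symm with h | h
        · exact absurd h (hpX x).ne'
        · exact h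
      have hpg := (hslice x).2 hcint hcz
      filter_upwards [hpg, hfx] with y hy hfy
      rw [← hfy]
      simp only [hF, hy, div_self (hg x y).ne', Real.log_one, mul_zero]
    have hF'z : ∀ᵐ z ∂(μ.prod ν), F' z = 0 := by
      have hms : MeasurableSet {z : α × β | F' z ≠ 0} :=
        (hF'meas.measurable (measurableSet_singleton (0:ℝ))).compl
      have : (μ.prod ν) {z : α × β | F' z ≠ 0} = 0 := by
        rw [Measure.measure_prod_null hms]
        filter_upwards [hmain] with x hx
        simpa [Set.preimage, ae_iff] using hx
      exact this
    have hFz : ∀ᵐ z ∂(μ.prod ν), F z = 0 := by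
      filter_upwards [hF'z, hFF'] with z h1 h2
      rw [h2, h1]
    filter_upwards [hFz] with z hz
    simp only [hF] at hz
    rcases mul_eq_zero.mp hz with h | h
    · rcases mul_eq_zero.mp h with h' | h'
      · exact absurd h' (hpX z.1).ne'
      · exact absurd h' (hp z.1 z.2).ne'
    · rcases Real.log_eq_zero.mp h with h' | h' | h'
      · exact absurd h' (div_pos (hp z.1 z.2) (hg z.1 z.2)).ne'
      · exact (div_eq_one_iff_eq (hg z.1 z.2).ne').mp h'
      · nlinarith [div_pos (hp z.1 z.2) (hg z.1 z.2)]
  · -- backward direction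
    intro hpg
    have hFz : ∀ᵐ z ∂(μ.prod ν), F z = 0 := by
      filter_upwards [hpg] with z hz
      simp only [hF, hz, div_self (hg z.1 z.2).ne', Real.log_one, mul_zero]
    calc (∫ z, F z ∂(μ.prod ν)) = ∫ _z, (0:ℝ) ∂(μ.prod ν) := integral_congr_ae hFz
      _ = 0 := integral_zero _ _

/-- With ratios `R_{Y|X} = p_{Y|X}/p̂_{Y|X}`, `R_X = p_X/p̂_X`, and
`p^g_X = R_X p̂_X = p_X`, `p^g_{Y|X} = R_{Y|X} p̂_{Y|X} = p_{Y|X}`,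
`q^g_{Y|X} = q_{Y|X}/R_{Y|X}`, the conditional cross entropy satisfies
`H(p_{Y|X}, q_{Y|X}) ≤ H(p^g_{Y|X}, q^g_{Y|X})` with equality iff
`p_{Y|X} = p̂_{Y|X}` a.e.; consequently `h(Y|X) ≤ H(p^g_{Y|X}, q^g_{Y|X})`
with equality iff `p_{Y|X} = p̂_{Y|X} = q_{Y|X}` a.e.
Here `H(p^g, q^g) = ∫ p_X p_{Y|X} log(p_{Y|X}/(q_{Y|X} p̂_{Y|X}))`. -/
theorem stmt_17 (n : ℕ)
    (pX phX : (Fin n → ℝ) → ℝ) (pYX phYX q : (Fin n → ℝ) → ℝ → ℝ)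
    (hpX : ∀ x, 0 < pX x) (hphX : ∀ x, 0 < phX x)
    (hpYX : ∀ x y, 0 < pYX x y) (hphYX : ∀ x y, 0 < phYX x y)
    (hq : ∀ x y, 0 < q x y)
    (hpX1 : ∫ x, pX x = 1) (hphX1 : ∫ x, phX x = 1)
    (hpYX1 : ∀ x, ∫ y, pYX x y = 1) (hphYX1 : ∀ x, ∫ y, phYX x y = 1)
    (hq1 : ∀ x, ∫ y, q x y = 1)
    (hIntH : Integrable (fun z : (Fin n → ℝ) × ℝ =>
        pX z.1 * pYX z.1 z.2 * Real.log (1 / q z.1 z.2)))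
    (hIntHg : Integrable (fun z : (Fin n → ℝ) × ℝ =>
        pX z.1 * pYX z.1 z.2 * Real.log (pYX z.1 z.2 / (q z.1 z.2 * phYX z.1 z.2))))
    (hInth : Integrable (fun z : (Fin n → ℝ) × ℝ =>
        pX z.1 * pYX z.1 z.2 * Real.log (pYX z.1 z.2))) :
    ((∫ z : (Fin n → ℝ) × ℝ, pX z.1 * pYX z.1 z.2 * Real.log (1 / q z.1 z.2))
        ≤ ∫ z : (Fin n → ℝ) × ℝ,
            pX z.1 * pYX z.1 z.2 * Real.log (pYX z.1 z.2 / (q z.1 z.2 * phYX z.1 z.2))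
      ∧ ((∫ z : (Fin n → ℝ) × ℝ, pX z.1 * pYX z.1 z.2 * Real.log (1 / q z.1 z.2))
            = (∫ z : (Fin n → ℝ) × ℝ,
                pX z.1 * pYX z.1 z.2 *
                  Real.log (pYX z.1 z.2 / (q z.1 z.2 * phYX z.1 z.2)))
          ↔ ∀ᵐ z ∂(volume : Measure ((Fin n → ℝ) × ℝ)),
              pYX z.1 z.2 = phYX z.1 z.2))
    ∧ (-(∫ z : (Fin n → ℝ) × ℝ, pX z.1 * pYX z.1 z.2 * Real.log (pYX z.1 z.2))
          ≤ ∫ z : (Fin n → ℝ) × ℝ,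
              pX z.1 * pYX z.1 z.2 * Real.log (pYX z.1 z.2 / (q z.1 z.2 * phYX z.1 z.2))
        ∧ (-(∫ z : (Fin n → ℝ) × ℝ, pX z.1 * pYX z.1 z.2 * Real.log (pYX z.1 z.2))
              = (∫ z : (Fin n → ℝ) × ℝ,
                  pX z.1 * pYX z.1 z.2 *
                    Real.log (pYX z.1 z.2 / (q z.1 z.2 * phYX z.1 z.2)))
            ↔ (∀ᵐ z ∂(volume : Measure ((Fin n → ℝ) × ℝ)),
                pYX z.1 z.2 = phYX z.1 z.2 ∧ q z.1 z.2 = pYX z.1 z.2))) := by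
  simp only [Measure.volume_eq_prod] at hIntH hIntHg hInth ⊢
  -- pointwise log identities
  have hlogHg : ∀ x y, Real.log (pYX x y / (q x y * phYX x y)) =
      Real.log (pYX x y) - Real.log (q x y) - Real.log (phYX x y) := by
    intro x y
    rw [Real.log_div (hpYX x y).ne' (mul_pos (hq x y) (hphYX x y)).ne',
      Real.log_mul (hq x y).ne' (hphYX x y).ne']
    ring
  have hlogH : ∀ x y, Real.log (1 / q x y) = -Real.log (q x y) := by
    intro x y
    rw [one_div, Real.log_inv]
  have hlog2 : ∀ x y, Real.log (pYX x y / phYX x y) =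
      Real.log (pYX x y) - Real.log (phYX x y) := fun x y =>
    Real.log_div (hpYX x y).ne' (hphYX x y).ne'
  have hlog1 : ∀ x y, Real.log (pYX x y / q x y) =
      Real.log (pYX x y) - Real.log (q x y) := fun x y =>
    Real.log_div (hpYX x y).ne' (hq x y).ne'
  -- integrability of the two KL integrands
  have IntK2 : Integrable (fun z : (Fin n → ℝ) × ℝ =>
      pX z.1 * pYX z.1 z.2 * Real.log (pYX z.1 z.2 / phYX z.1 z.2))
      ((volume : Measure (Fin n → ℝ)).prod (volume : Measure ℝ)) := by
    refine (hIntHg.sub hIntH).congr (Filter.Eventually.of_forall fun z => ?_)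
    simp only [Pi.sub_apply, hlogHg, hlogH, hlog2]
    ring
  have IntK1 : Integrable (fun z : (Fin n → ℝ) × ℝ =>
      pX z.1 * pYX z.1 z.2 * Real.log (pYX z.1 z.2 / q z.1 z.2))
      ((volume : Measure (Fin n → ℝ)).prod (volume : Measure ℝ)) := by
    refine (hInth.add hIntH).congr (Filter.Eventually.of_forall fun z => ?_)
    simp only [Pi.add_apply, hlogH, hlog1]
    ring
  -- the two Gibbs inequalities
  have G2 := gibbs_prod volume volume pX pYX phYX hpX hpYX hphYX hpYX1 hphYX1 IntK2
  have G1 := gibbs_prod volume volume pX pYX q hpX hpYX hq hpYX1 hq1 IntK1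
  set K2 := ∫ z : (Fin n → ℝ) × ℝ, pX z.1 * pYX z.1 z.2 *
      Real.log (pYX z.1 z.2 / phYX z.1 z.2) ∂((volume : Measure (Fin n → ℝ)).prod volume)
    with hK2def
  set K1 := ∫ z : (Fin n → ℝ) × ℝ, pX z.1 * pYX z.1 z.2 *
      Real.log (pYX z.1 z.2 / q z.1 z.2) ∂((volume : Measure (Fin n → ℝ)).prod volume)
    with hK1def
  set A := ∫ z : (Fin n → ℝ) × ℝ, pX z.1 * pYX z.1 z.2 *
      Real.log (1 / q z.1 z.2) ∂((volume : Measure (Fin n → ℝ)).prod volume) with hAdef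
  set B := ∫ z : (Fin n → ℝ) × ℝ, pX z.1 * pYX z.1 z.2 *
      Real.log (pYX z.1 z.2 / (q z.1 z.2 * phYX z.1 z.2))
      ∂((volume : Measure (Fin n → ℝ)).prod volume) with hBdef
  set C := ∫ z : (Fin n → ℝ) × ℝ, pX z.1 * pYX z.1 z.2 *
      Real.log (pYX z.1 z.2) ∂((volume : Measure (Fin n → ℝ)).prod volume) with hCdef
  have hB : B = A + K2 := by
    rw [hBdef, hAdef, hK2def, ← integral_add hIntH IntK2]
    refine integral_congr_ae (Filter.Eventually.of_forall fun z => ?_)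
    simp only [hlogHg, hlogH, hlog2]
    ring
  have hK1 : K1 = C + A := by
    rw [hK1def, hCdef, hAdef, ← integral_add hInth hIntH]
    refine integral_congr_ae (Filter.Eventually.of_forall fun z => ?_)
    simp only [hlogH, hlog1]
    ring
  refine ⟨⟨by linarith [G2.1], ?_⟩, by linarith [G1.1, G2.1], ?_⟩
  · constructor
    · intro h
      exact G2.2.mp (by linarith)
    · intro h
      have := G2.2.mpr h
      linarith
  · constructor
    · intro h
      have hK10 : K1 = 0 := by linarith [G1.1, G2.1]
      have hK20 : K2 = 0 := by linarith [G1.1, G2.1]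
      filter_upwards [G2.2.mp hK20, G1.2.mp hK10] with z h2 h1
      exact ⟨h2, h1.symm⟩
    · intro h
      have h2 : K2 = 0 := G2.2.mpr (h.mono fun z hz => hz.1)
      have h1 : K1 = 0 := G1.2.mpr (h.mono fun z hz => hz.2.symm)
      linarith
end
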